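/- Let n ≥ 4 be an even integer, μ > 0, and let p, κ be real numbers satisfying p_0(n+μ) < p < p_Fuj((n+μ-1)/2), 0 < κ ≤ (n+μ-1)p/2 − (n+μ+1)/2, and κ > 2/(p−1) − (n+μ−1)/2, and set q = (n−1)p/2 − (n+1)/2. Assume in addition −1/2 ≤ q ≤ (n−3)/2 and p < p_Fuj(μ) = 1 + 2/μ. Let γ ∈ {0, 1/2}. Then there exists a constant C > 0 (depending only on n, μ, p, κ, γ) such that for all t ≥ 0 and r > 0, Q_γ(t,r) := ∫_{τ=max(t−r,0)}^{t} ⟨τ⟩^{-μ(p-1)/2} ⟨t−τ−r⟩^{-q+p/2−1−γ} φ_κ(τ, −(t−τ−r))^p dτ ≤ C ⟨t−r⟩^{-κ−γ}. -/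
import Mathlib


open MeasureTheory Real

/-- Japanese bracket `⟨y⟩ = 1 + |y|`. -/
noncomputable def jb (y : ℝ) : ℝ := 1 + |y|

/-- Strauss exponent: positive root of `(N-1)p² - (N+1)p - 2 = 0`. -/
noncomputable def p0 (N : ℝ) : ℝ := (N + 1 + Real.sqrt (N ^ 2 + 10 * N - 7)) / (2 * (N - 1))

/-- Fujita exponent. -/
noncomputable def pFuj (N : ℝ) : ℝ := 1 + 2 / N

/-- The weight function `φ_κ(t,r) = ⟨t+r⟩^{-1/2} ⟨t-r⟩^{-κ}`. -/
noncomputable def phi (κ t r : ℝ) : ℝ := jb (t + r) ^ (-(1 / 2 : ℝ)) * jb (t - r) ^ (-κ)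

lemma jb_pos (y : ℝ) : 0 < jb y := by unfold jb; positivity

lemma one_le_jb (y : ℝ) : 1 ≤ jb y := by unfold jb; simp [abs_nonneg]

lemma jb_of_nonneg {y : ℝ} (h : 0 ≤ y) : jb y = 1 + y := by unfold jb; rw [abs_of_nonneg h]

lemma jb_of_nonpos {y : ℝ} (h : y ≤ 0) : jb y = 1 - y := by
  unfold jb; rw [abs_of_nonpos h]; ring

lemma phi_pos (κ t r : ℝ) : 0 < phi κ t r :=
  mul_pos (Real.rpow_pos_of_pos (jb_pos _) _) (Real.rpow_pos_of_pos (jb_pos _) _)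

lemma split_bound {u v w α β : ℝ} (hu : 1 ≤ u) (hv : 1 ≤ v) (huw : u ≤ w) (hvw : v ≤ w)
    (hα : 0 ≤ α) (hβ : 0 ≤ β) : w ^ (-(α + β)) ≤ u ^ (-α) * v ^ (-β) := by
  have hu0 : 0 < u := lt_of_lt_of_le one_pos hu
  have hv0 : 0 < v := lt_of_lt_of_le one_pos hv
  have hw0 : 0 < w := lt_of_lt_of_le hu0 huw
  have : w ^ (-(α + β)) = w ^ (-α) * w ^ (-β) := by
    rw [← Real.rpow_add hw0]; ring_nf
  rw [this]
  exact mul_le_mul (Real.rpow_le_rpow_of_nonpos hu0 huw (neg_nonpos.mpr hα))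
    (Real.rpow_le_rpow_of_nonpos hv0 hvw (neg_nonpos.mpr hβ))
    (Real.rpow_nonneg hw0.le _) (Real.rpow_nonneg hu0.le _)

lemma integral_decay {c : ℝ} (hc : 1 < c) {m t : ℝ} (hmt : m ≤ t) :
    ∫ τ in m..t, (1 + (τ - m)) ^ (-c) ≤ 1 / (c - 1) := by
  have hT : 0 ≤ t - m := by linarith
  have h0 : ∫ τ in m..t, (1 + (τ - m)) ^ (-c) = ∫ σ in (0:ℝ)..(t - m), (1 + σ) ^ (-c) := by
    have := intervalIntegral.integral_comp_sub_right (a := m) (b := t)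
      (fun σ : ℝ => (1 + σ) ^ (-c)) m
    simpa using this
  have h1 : ∫ σ in (0:ℝ)..(t - m), (1 + σ) ^ (-c) = ∫ x in (1:ℝ)..(1 + (t - m)), x ^ (-c) := by
    have := intervalIntegral.integral_comp_add_left (a := (0:ℝ)) (b := t - m)
      (fun x : ℝ => x ^ (-c)) 1
    simpa using this
  have hmem : (0:ℝ) ∉ Set.uIcc (1:ℝ) (1 + (t - m)) := by
    rw [Set.uIcc_of_le (by linarith)]
    intro h
    have := (Set.mem_Icc.mp h).1
    linarith
  have h2 : ∫ x in (1:ℝ)..(1 + (t - m)), x ^ (-c)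
      = ((1 + (t - m)) ^ (-c + 1) - 1 ^ (-c + 1)) / (-c + 1) := by
    rw [integral_rpow (Or.inr ⟨by intro h; simp only [neg_eq_iff_eq_neg] at h; linarith [h], hmem⟩)]
  have hA : 0 ≤ (1 + (t - m)) ^ (-c + 1) := Real.rpow_nonneg (by linarith) _
  have h3 : ((1 + (t - m)) ^ (-c + 1) - 1 ^ (-c + 1)) / (-c + 1) ≤ 1 / (c - 1) := by
    rw [Real.one_rpow, div_le_iff_of_neg (by linarith : -c + 1 < 0)]
    have hne : c - 1 ≠ 0 := by linarith
    have : 1 / (c - 1) * (-c + 1) = -1 := by field_simp; ring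
    rw [this]; linarith
  rw [h0, h1, h2]; exact h3


lemma integral_le_aux {f : ℝ → ℝ} (hf : Continuous f) {m t c A : ℝ}
    (hmt : m ≤ t) (hc : 1 < c) (hA : 0 ≤ A)
    (hbd : ∀ τ ∈ Set.Icc m t, f τ ≤ A * (1 + (τ - m)) ^ (-c)) :
    ∫ τ in m..t, f τ ≤ A * (1 / (c - 1)) := by
  have hgc : ContinuousOn (fun τ : ℝ => A * (1 + (τ - m)) ^ (-c)) (Set.Icc m t) := by
    apply ContinuousOn.mul continuousOn_const
    apply ContinuousOn.rpow_const
    · fun_prop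
    · intro x hx
      left
      have h1 := hx.1
      have : (0:ℝ) < 1 + (x - m) := by linarith
      exact this.ne'
  have hint : IntervalIntegrable (fun τ : ℝ => A * (1 + (τ - m)) ^ (-c)) volume m t := by
    apply ContinuousOn.intervalIntegrable
    rwa [Set.uIcc_of_le hmt]
  have h1 := intervalIntegral.integral_mono_on hmt (hf.intervalIntegrable m t) hint hbd
  calc ∫ τ in m..t, f τ ≤ ∫ τ in m..t, A * (1 + (τ - m)) ^ (-c) := h1
    _ = A * ∫ τ in m..t, (1 + (τ - m)) ^ (-c) := intervalIntegral.integral_const_mul _ _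
    _ ≤ A * (1 / (c - 1)) := mul_le_mul_of_nonneg_left (integral_decay hc hmt) hA

set_option maxHeartbeats 1600000

/-- Proposition 3.9, estimate for `Q_γ(t,r)`. -/
theorem estimate_Q_gamma (n : ℕ) (hn : 4 ≤ n) (hne : Even n)
    (μ : ℝ) (hμ : 0 < μ) (p κ q γ : ℝ)
    (hp₁ : p0 ((n : ℝ) + μ) < p) (hp₂ : p < pFuj (((n : ℝ) + μ - 1) / 2))
    (hκ₁ : 0 < κ) (hκ₂ : κ ≤ ((n : ℝ) + μ - 1) * p / 2 - ((n : ℝ) + μ + 1) / 2)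
    (hκ₃ : κ > 2 / (p - 1) - ((n : ℝ) + μ - 1) / 2)
    (hq : q = ((n : ℝ) - 1) * p / 2 - ((n : ℝ) + 1) / 2)
    (hq₀ : -(1 / 2 : ℝ) ≤ q) (hq₁ : q ≤ ((n : ℝ) - 3) / 2)
    (hpμ : p < pFuj μ) (hγ : γ = 0 ∨ γ = 1 / 2) :
    ∃ C > 0, ∀ t : ℝ, 0 ≤ t → ∀ r : ℝ, 0 < r →
      (∫ τ in (max (t - r) 0)..t,
          jb τ ^ (-(μ * (p - 1) / 2)) * jb (t - τ - r) ^ (-q + p / 2 - 1 - γ) *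
            phi κ τ (-(t - τ - r)) ^ p) ≤
        C * jb (t - r) ^ (-κ - γ) := by
  have hn4 : (4:ℝ) ≤ (n:ℝ) := by exact_mod_cast hn
  set a := μ * (p - 1) / 2 with ha_def
  set B := -q + p / 2 - 1 - γ with hB_def
  have hγ0 : 0 ≤ γ := by rcases hγ with h | h <;> rw [h] <;> norm_num
  have hγ2 : γ ≤ 1/2 := by rcases hγ with h | h <;> rw [h] <;> norm_num
  have hsq : (n:ℝ) + μ ≤ Real.sqrt (((n:ℝ) + μ) ^ 2 + 10 * ((n:ℝ) + μ) - 7) := by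
    rw [Real.le_sqrt (by linarith) (by nlinarith)]
    nlinarith
  have hp0 : 1 < p0 ((n:ℝ) + μ) := by
    unfold p0
    rw [lt_div_iff₀ (by linarith)]
    linarith [hsq]
  have hp1 : 1 < p := lt_trans hp0 hp₁
  have hppos : 0 < p - 1 := by linarith
  have ha0 : 0 < a := by rw [ha_def]; exact div_pos (mul_pos hμ hppos) (by norm_num)
  have hqa_id : ((n:ℝ) + μ - 1) * p / 2 - ((n:ℝ) + μ + 1) / 2 = q + a := by
    rw [hq, ha_def]; ring
  have hκ₂' : κ ≤ q + a := by rw [← hqa_id]; exact hκ₂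
  have hqa : 0 < q + a := lt_of_lt_of_le hκ₁ hκ₂'
  have hid2 : ((n:ℝ) + μ - 1) * (p - 1) / 2 = q + a + 1 := by rw [hq, ha_def]; ring
  have hard : 1 - q - a < κ * (p - 1) := by
    have h2 : (2 / (p - 1) - ((n:ℝ) + μ - 1) / 2) * (p - 1) < κ * (p - 1) :=
      mul_lt_mul_of_pos_right hκ₃ hppos
    have h3 : (2 / (p - 1) - ((n:ℝ) + μ - 1) / 2) * (p - 1)
        = 2 - ((n:ℝ) + μ - 1) * (p - 1) / 2 := by field_simp
    rw [h3, hid2] at h2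
    linarith
  have hp3 : p < 3 := by
    have h4 : pFuj (((n:ℝ) + μ - 1) / 2) = 1 + 4 / ((n:ℝ) + μ - 1) := by
      unfold pFuj
      rw [div_div_eq_mul_div]
      norm_num
    rw [h4] at hp₂
    have h5 : 4 / ((n:ℝ) + μ - 1) < 2 := by
      rw [div_lt_iff₀ (by linarith)]
      linarith
    linarith
  have hκp : 0 ≤ κ * (p - 1) := le_of_lt (mul_pos hκ₁ hppos)
  set lam1 := max 0 (γ - κ * (p - 1)) with hlam1_def
  have hlam1_0 : 0 ≤ lam1 := le_max_left _ _
  have hlam1_ge : γ - κ * (p - 1) ≤ lam1 := le_max_right _ _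
  set bp := max B 0 with hbp_def
  set lam2 := max 0 (bp + γ - κ * (p - 1)) with hlam2_def
  have hlam2_0 : 0 ≤ lam2 := le_max_left _ _
  have hlam2_ge : bp + γ - κ * (p - 1) ≤ lam2 := le_max_right _ _
  have hBγ : B + γ = p / 2 - 1 - q := by rw [hB_def]; ring
  have hlam1_lt : lam1 < q + γ + a := by
    apply max_lt <;> linarith
  have hlam1p : lam1 ≤ p / 2 := by
    apply max_le <;> linarith
  have hlam2p : lam2 ≤ p / 2 := by
    apply max_le
    · linarith
    · rcases le_or_gt B 0 with hB | hB
      · rw [hbp_def, max_eq_right hB]; linarith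
      · rw [hbp_def, max_eq_left hB.le]; linarith
  set θ := min 1 ((q + γ + a - lam1) / (2 * a)) with hθ_def
  have hθ0 : 0 ≤ θ :=
    le_min (by norm_num) (div_nonneg (by linarith) (by linarith))
  have hθ1 : θ ≤ 1 := min_le_left _ _
  have haθ : a * θ < q + γ + a - lam1 := by
    have h1 : a * θ ≤ a * ((q + γ + a - lam1) / (2 * a)) :=
      mul_le_mul_of_nonneg_left (min_le_right _ _) ha0.le
    have h2 : a * ((q + γ + a - lam1) / (2 * a)) = (q + γ + a - lam1) / 2 := by
      field_simp
    rw [h2] at h1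
    linarith
  set c1 := q + 1 + γ + a * (1 - θ) - lam1 with hc1_def
  have hc1 : 1 < c1 := by
    have h : a * (1 - θ) = a - a * θ := by ring
    rw [hc1_def, h]
    linarith
  set c2 := a - B + p / 2 - lam2 with hc2_def
  have hc2 : 1 < c2 := by
    rcases le_or_gt B 0 with hB | hB
    · have hbp0 : bp = 0 := by rw [hbp_def]; exact max_eq_right hB
      rcases le_or_gt (γ - κ * (p - 1)) 0 with h | h
      · have hl : lam2 = 0 := by rw [hlam2_def, hbp0, zero_add, max_eq_left h]
        rw [hc2_def, hl]
        linarith only [hqa, hγ0, hBγ, ha0, hκp]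
      · have hl : lam2 = γ - κ * (p - 1) := by
          rw [hlam2_def, hbp0, zero_add, max_eq_right h.le]
        rw [hc2_def, hl]
        linarith only [hard, hqa, hBγ, hγ0, ha0]
    · have hbpB : bp = B := by rw [hbp_def]; exact max_eq_left hB.le
      rcases le_or_gt (B + γ - κ * (p - 1)) 0 with h | h
      · have hl : lam2 = 0 := by rw [hlam2_def, hbpB, max_eq_left h]
        rw [hc2_def, hl]
        linarith only [hqa, hγ0, hBγ, ha0, hκp]
      · have hl : lam2 = B + γ - κ * (p - 1) := by
          rw [hlam2_def, hbpB, max_eq_right h.le]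
        rw [hc2_def, hl]
        linarith only [hBγ, hard, hq₀, hp3, hγ0, ha0]
  refine ⟨1 / (c1 - 1) + 1 / (c2 - 1),
    add_pos (div_pos one_pos (by linarith)) (div_pos one_pos (by linarith)), ?_⟩
  intro t ht r hr
  set s := t - r with hs_def
  set S := jb s with hS_def
  have hS1 : 1 ≤ S := by rw [hS_def]; exact one_le_jb _
  have hS0 : 0 < S := lt_of_lt_of_le one_pos hS1
  set m := max s 0 with hm_def
  have hm0 : 0 ≤ m := le_max_right _ _
  have hmt : m ≤ t := by
    apply max_le _ ht
    rw [hs_def]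
    linarith
  have hjb_cont : Continuous jb := by
    unfold jb
    exact continuous_const.add continuous_abs
  have hjb_ne : ∀ y : ℝ, jb y ≠ 0 := fun y => (jb_pos y).ne'
  have hf_cont : Continuous fun τ : ℝ =>
      jb τ ^ (-a) * jb (t - τ - r) ^ B * phi κ τ (-(t - τ - r)) ^ p := by
    refine Continuous.mul (Continuous.mul ?_ ?_) ?_
    · exact hjb_cont.rpow_const fun x => Or.inl (hjb_ne x)
    · exact (hjb_cont.comp (by fun_prop)).rpow_const fun x => Or.inl (hjb_ne _)
    · refine Continuous.rpow_const ?_ fun x => Or.inl (phi_pos _ _ _).ne'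
      unfold phi
      refine Continuous.mul ?_ ?_
      · exact (hjb_cont.comp (by fun_prop)).rpow_const fun x => Or.inl (hjb_ne _)
      · exact (hjb_cont.comp (by fun_prop)).rpow_const fun x => Or.inl (hjb_ne _)
  have ht1 : 0 < t - s := by rw [hs_def]; linarith
  rcases le_or_gt 0 s with hcase | hcase
  · -- Case 1 : 0 ≤ t - r
    have hm : m = s := by rw [hm_def]; exact max_eq_left hcase
    have hSe : S = 1 + s := by rw [hS_def]; exact jb_of_nonneg hcase
    have key : ∀ τ ∈ Set.Icc m t,
        jb τ ^ (-a) * jb (t - τ - r) ^ B * phi κ τ (-(t - τ - r)) ^ p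
          ≤ S ^ (-κ - γ) * (1 + (τ - m)) ^ (-c1) := by
      intro τ hτ
      obtain ⟨hτ1, hτ2⟩ := hτ
      rw [hm] at hτ1 ⊢
      have hτ0 : 0 ≤ τ := le_trans hcase hτ1
      have e1 : t - τ - r = s - τ := by rw [hs_def]; ring
      have eu : jb τ = 1 + τ := jb_of_nonneg hτ0
      have ev : jb (t - τ - r) = 1 + (τ - s) := by
        rw [e1, jb_of_nonpos (by linarith : s - τ ≤ 0)]
        ring
      have h2τ : (0:ℝ) ≤ 2 * τ - s := by linarith
      have ephi : phi κ τ (-(t - τ - r)) = (1 + (2 * τ - s)) ^ (-(1 / 2 : ℝ)) * S ^ (-κ) := by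
        rw [e1]
        unfold phi
        rw [show τ + -(s - τ) = 2 * τ - s by ring, show τ - -(s - τ) = s by ring,
          jb_of_nonneg h2τ, ← hS_def]
      rw [eu, ev, ephi]
      have hu0 : (0:ℝ) < 1 + τ := by linarith
      have hv0 : (0:ℝ) < 1 + (τ - s) := by linarith
      have hw0 : (0:ℝ) < 1 + (2 * τ - s) := by linarith
      have hv1 : (1:ℝ) ≤ 1 + (τ - s) := by linarith
      have hvu : 1 + (τ - s) ≤ 1 + τ := by linarith
      have hSu : S ≤ 1 + τ := by rw [hSe]; linarith
      have hvw : 1 + (τ - s) ≤ 1 + (2 * τ - s) := by linarith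
      have hSw : S ≤ 1 + (2 * τ - s) := by rw [hSe]; linarith
      have step1 : (1 + τ) ^ (-a)
          ≤ (1 + (τ - s)) ^ (-(a * (1 - θ))) * S ^ (-(a * θ)) := by
        rw [show -a = -(a * (1 - θ) + a * θ) by ring]
        exact split_bound hv1 hS1 hvu hSu (mul_nonneg ha0.le (by linarith))
          (mul_nonneg ha0.le hθ0)
      have step2 : (1 + (2 * τ - s)) ^ (-(1 / 2 : ℝ) * p)
          ≤ (1 + (τ - s)) ^ (-(p / 2 - lam1)) * S ^ (-lam1) := by
        rw [show (-(1 / 2 : ℝ)) * p = -((p / 2 - lam1) + lam1) by ring]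
        exact split_bound hv1 hS1 hvw hSw (by linarith) hlam1_0
      have hprod : ((1 + (2 * τ - s)) ^ (-(1 / 2 : ℝ)) * S ^ (-κ)) ^ p
          = (1 + (2 * τ - s)) ^ (-(1 / 2 : ℝ) * p) * S ^ (-κ * p) := by
        rw [Real.mul_rpow (Real.rpow_nonneg hw0.le _) (Real.rpow_nonneg hS0.le _),
          ← Real.rpow_mul hw0.le, ← Real.rpow_mul hS0.le]
      calc (1 + τ) ^ (-a) * (1 + (τ - s)) ^ B
            * ((1 + (2 * τ - s)) ^ (-(1 / 2 : ℝ)) * S ^ (-κ)) ^ p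
          = (1 + τ) ^ (-a) * (1 + (τ - s)) ^ B
            * ((1 + (2 * τ - s)) ^ (-(1 / 2 : ℝ) * p) * S ^ (-κ * p)) := by rw [hprod]
        _ ≤ ((1 + (τ - s)) ^ (-(a * (1 - θ))) * S ^ (-(a * θ))) * (1 + (τ - s)) ^ B
            * (((1 + (τ - s)) ^ (-(p / 2 - lam1)) * S ^ (-lam1)) * S ^ (-κ * p)) := by
            apply mul_le_mul
            · exact mul_le_mul_of_nonneg_right step1 (Real.rpow_nonneg hv0.le _)
            · exact mul_le_mul_of_nonneg_right step2 (Real.rpow_nonneg hS0.le _)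
            · exact mul_nonneg (Real.rpow_nonneg hw0.le _) (Real.rpow_nonneg hS0.le _)
            · exact mul_nonneg (mul_nonneg (Real.rpow_nonneg hv0.le _)
                (Real.rpow_nonneg hS0.le _)) (Real.rpow_nonneg hv0.le _)
        _ = (1 + (τ - s)) ^ (-(a * (1 - θ)) + B + -(p / 2 - lam1))
            * S ^ (-(a * θ) + -lam1 + -κ * p) := by
            rw [Real.rpow_add hv0, Real.rpow_add hv0, Real.rpow_add hS0, Real.rpow_add hS0]
            ring
        _ ≤ S ^ (-κ - γ) * (1 + (τ - s)) ^ (-c1) := by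
            rw [show -(a * (1 - θ)) + B + -(p / 2 - lam1) = -c1 by rw [hB_def, hc1_def]; ring,
              mul_comm]
            apply mul_le_mul_of_nonneg_right _ (Real.rpow_nonneg hv0.le _)
            apply Real.rpow_le_rpow_of_exponent_le hS1
            have haux : 0 ≤ a * θ := mul_nonneg ha0.le hθ0
            linarith [hlam1_ge]
    refine le_trans (integral_le_aux hf_cont hmt hc1 (Real.rpow_nonneg hS0.le _) key) ?_
    rw [mul_comm]
    apply mul_le_mul_of_nonneg_right _ (Real.rpow_nonneg hS0.le _)
    have h2pos : 0 < 1 / (c2 - 1) := div_pos one_pos (by linarith)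
    linarith
  · -- Case 2 : t - r < 0
    have hm : m = 0 := by rw [hm_def]; exact max_eq_right hcase.le
    have hSe : S = 1 - s := by rw [hS_def]; exact jb_of_nonpos hcase.le
    have key : ∀ τ ∈ Set.Icc m t,
        jb τ ^ (-a) * jb (t - τ - r) ^ B * phi κ τ (-(t - τ - r)) ^ p
          ≤ S ^ (-κ - γ) * (1 + (τ - m)) ^ (-c2) := by
      intro τ hτ
      obtain ⟨hτ1, hτ2⟩ := hτ
      rw [hm] at hτ1 ⊢
      rw [sub_zero]
      have hτ0 : 0 ≤ τ := hτ1
      have e1 : t - τ - r = s - τ := by rw [hs_def]; ring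
      have eu : jb τ = 1 + τ := jb_of_nonneg hτ0
      have ev : jb (t - τ - r) = 1 + (τ - s) := by
        rw [e1, jb_of_nonpos (by linarith : s - τ ≤ 0)]
        ring
      have h2τ : (0:ℝ) ≤ 2 * τ - s := by linarith
      have ephi : phi κ τ (-(t - τ - r)) = (1 + (2 * τ - s)) ^ (-(1 / 2 : ℝ)) * S ^ (-κ) := by
        rw [e1]
        unfold phi
        rw [show τ + -(s - τ) = 2 * τ - s by ring, show τ - -(s - τ) = s by ring,
          jb_of_nonneg h2τ, ← hS_def]
      rw [eu, ev, ephi]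
      have hu0 : (0:ℝ) < 1 + τ := by linarith
      have hv0 : (0:ℝ) < 1 + (τ - s) := by linarith
      have hw0 : (0:ℝ) < 1 + (2 * τ - s) := by linarith
      have hu1 : (1:ℝ) ≤ 1 + τ := by linarith
      have huv : 1 + τ ≤ 1 + (τ - s) := by linarith
      have hSv : S ≤ 1 + (τ - s) := by rw [hSe]; linarith
      have huw : 1 + τ ≤ 1 + (2 * τ - s) := by linarith
      have hSw : S ≤ 1 + (2 * τ - s) := by rw [hSe]; linarith
      have hvus : 1 + (τ - s) ≤ (1 + τ) * S := by
        rw [hSe]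
        have : (1 + τ) * (1 - s) = 1 + (τ - s) + τ * (-s) := by ring
        rw [this]
        have : 0 ≤ τ * (-s) := mul_nonneg hτ0 (by linarith)
        linarith
      have step1 : (1 + (τ - s)) ^ B ≤ (1 + τ) ^ B * S ^ bp := by
        rcases le_or_gt B 0 with hB | hB
        · rw [hbp_def, max_eq_right hB, Real.rpow_zero, mul_one]
          exact Real.rpow_le_rpow_of_nonpos hu0 huv hB
        · rw [hbp_def, max_eq_left hB.le]
          calc (1 + (τ - s)) ^ B ≤ ((1 + τ) * S) ^ B :=
                Real.rpow_le_rpow hv0.le hvus hB.le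
            _ = (1 + τ) ^ B * S ^ B := Real.mul_rpow hu0.le hS0.le
      have step2 : (1 + (2 * τ - s)) ^ (-(1 / 2 : ℝ) * p)
          ≤ (1 + τ) ^ (-(p / 2 - lam2)) * S ^ (-lam2) := by
        rw [show (-(1 / 2 : ℝ)) * p = -((p / 2 - lam2) + lam2) by ring]
        exact split_bound hu1 hS1 huw hSw (by linarith) hlam2_0
      have hprod : ((1 + (2 * τ - s)) ^ (-(1 / 2 : ℝ)) * S ^ (-κ)) ^ p
          = (1 + (2 * τ - s)) ^ (-(1 / 2 : ℝ) * p) * S ^ (-κ * p) := by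
        rw [Real.mul_rpow (Real.rpow_nonneg hw0.le _) (Real.rpow_nonneg hS0.le _),
          ← Real.rpow_mul hw0.le, ← Real.rpow_mul hS0.le]
      calc (1 + τ) ^ (-a) * (1 + (τ - s)) ^ B
            * ((1 + (2 * τ - s)) ^ (-(1 / 2 : ℝ)) * S ^ (-κ)) ^ p
          = (1 + τ) ^ (-a) * (1 + (τ - s)) ^ B
            * ((1 + (2 * τ - s)) ^ (-(1 / 2 : ℝ) * p) * S ^ (-κ * p)) := by rw [hprod]
        _ ≤ ((1 + τ) ^ (-a) * ((1 + τ) ^ B * S ^ bp))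
            * (((1 + τ) ^ (-(p / 2 - lam2)) * S ^ (-lam2)) * S ^ (-κ * p)) := by
            apply mul_le_mul
            · exact mul_le_mul_of_nonneg_left step1 (Real.rpow_nonneg hu0.le _)
            · exact mul_le_mul_of_nonneg_right step2 (Real.rpow_nonneg hS0.le _)
            · exact mul_nonneg (Real.rpow_nonneg hw0.le _) (Real.rpow_nonneg hS0.le _)
            · exact mul_nonneg (Real.rpow_nonneg hu0.le _)
                (mul_nonneg (Real.rpow_nonneg hu0.le _) (Real.rpow_nonneg hS0.le _))
        _ = (1 + τ) ^ (-a + B + -(p / 2 - lam2)) * S ^ (bp + -lam2 + -κ * p) := by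
            rw [Real.rpow_add hu0, Real.rpow_add hu0, Real.rpow_add hS0, Real.rpow_add hS0]
            ring
        _ ≤ S ^ (-κ - γ) * (1 + τ) ^ (-c2) := by
            rw [show -a + B + -(p / 2 - lam2) = -c2 by rw [hc2_def]; ring, mul_comm]
            apply mul_le_mul_of_nonneg_right _ (Real.rpow_nonneg hu0.le _)
            apply Real.rpow_le_rpow_of_exponent_le hS1
            linarith [hlam2_ge]
    refine le_trans (integral_le_aux hf_cont hmt hc2 (Real.rpow_nonneg hS0.le _) key) ?_
    rw [mul_comm]
    apply mul_le_mul_of_nonneg_right _ (Real.rpow_nonneg hS0.le _)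
    have h1pos : 0 < 1 / (c1 - 1) := div_pos one_pos (by linarith)
    linarith
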